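/- Let V_n^π be the standard n-step value function of an MDP M with per-step cost c that is constant along any chain of deterministic forced transitions, and let 𝕍_n^π be the modified value function on the reduced MDP M' (obtained by collapsing each chain of k deterministic transitions into a single transition of duration k+1 with cost c_n(s,a,s') = c(s,a,s')·min(n, t(s,a)) and recursion 𝕍_n^π(s) = ∑_{s'} p'(s'|s,π(s))(c_n(s,π(s),s') + 𝕍_{n−t(s,π(s))}^π(s'))). Then for every policy π of M, its projection π' onto M', every n ≥ 0 and every state s_a in the reduced state space, V_n^π(s_a) = 𝕍_n^π(s_a). -/

import Mathlib

/-!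
Along the chain `s_a = x 0 → ⋯ → x k` every step is deterministic with the same cost `κ`, so
unrolling the Bellman recursion of `V` over the chain gives `V (m + j) (x 0) = j κ + V m (x j)`.
Hence `V` itself satisfies the recursion defining `𝕍` on `S'`: `n ≤ k` steps only collect `n κ`,
while `n > k` steps collect `k κ`, then one stochastic step with kernel `p'` and cost `κ`.
Two functions satisfying the same recursion over a kernel that never leaves `S'` agree on `S'`,
by strong induction on the horizon.
-/

open Finset

section ValueRecursion

variable {S A : Type*} [Fintype S] [DecidableEq S] {p c : S → A → S → ℝ} {π : S → A}
  {V : ℕ → S → ℝ}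

theorem value_succ_eq_of_deterministic
    (hV : ∀ n s, V (n + 1) s = ∑ s' : S, p s (π s) s' * (c s (π s) s' + V n s'))
    {s s₁ : S} {κ : ℝ} (hdet : ∀ s', p s (π s) s' = if s' = s₁ then 1 else 0)
    (hc : ∀ s', c s (π s) s' = κ) (m : ℕ) :
    V (m + 1) s = κ + V m s₁ := by
  rw [hV, sum_eq_single s₁ (fun b _ hb => by rw [hdet, if_neg hb, zero_mul])
    (fun h => absurd (mem_univ _) h), hdet, if_pos rfl, one_mul, hc]

variable (hV : ∀ n s, V (n + 1) s = ∑ s' : S, p s (π s) s' * (c s (π s) s' + V n s'))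
  {x : ℕ → S} {k : ℕ} {κ : ℝ}
  (hdet : ∀ i < k, ∀ s', p (x i) (π (x i)) s' = if s' = x (i + 1) then 1 else 0)
include hV hdet

theorem value_add_eq_along_chain (hc : ∀ i < k, ∀ s', c (x i) (π (x i)) s' = κ)
    {j : ℕ} (hj : j ≤ k) (m : ℕ) :
    V (m + j) (x 0) = j * κ + V m (x j) := by
  induction j generalizing m with
  | zero => simp
  | succ j ih =>
    rw [← add_assoc, add_right_comm, ih (by omega) (m + 1),
      value_succ_eq_of_deterministic hV (hdet j (by omega)) (hc j (by omega))]
    push_cast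
    ring

theorem value_eq_collapsed_bellman (hV0 : ∀ s, V 0 s = 0)
    (hprob : ∑ s' : S, p (x k) (π (x k)) s' = 1)
    (hc : ∀ i ≤ k, ∀ s', c (x i) (π (x i)) s' = κ) (n : ℕ) :
    V n (x 0) = ∑ s' : S, p (x k) (π (x k)) s'
      * (κ * (min n (k + 1) : ℕ) + V (n - (k + 1)) s') := by
  have hchain : ∀ j ≤ k, ∀ m, V (m + j) (x 0) = j * κ + V m (x j) :=
    fun j hj => value_add_eq_along_chain hV hdet (fun i hi => hc i hi.le) hj
  rcases le_or_gt n k with hnk | hkn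
  · rw [min_eq_left (by omega), Nat.sub_eq_zero_of_le (by omega)]
    simp_rw [hV0, add_zero, ← sum_mul, hprob, one_mul]
    simpa [hV0, mul_comm] using hchain n hnk 0
  · obtain ⟨m, rfl⟩ : ∃ m, n = m + 1 + k := ⟨n - k - 1, by omega⟩
    rw [min_eq_right (by omega), show m + 1 + k - (k + 1) = m by omega, hchain k le_rfl,
      hV, ← mul_one (k * κ), ← hprob, mul_sum, ← sum_add_distrib]
    refine sum_congr rfl fun s' _ => ?_
    rw [hc k le_rfl]
    push_cast
    ring

end ValueRecursion

theorem eq_of_same_recursion {S : Type*} [Fintype S] (P : S → Prop) (q : S → S → ℝ)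
    (r : ℕ → S → ℝ) (t : S → ℕ) (ht : ∀ s, 0 < t s)
    (hclosed : ∀ s, P s → ∀ s', q s s' ≠ 0 → P s') (V W : ℕ → S → ℝ)
    (h0 : ∀ s, V 0 s = W 0 s)
    (hV : ∀ n s, P s → 0 < n → V n s = ∑ s' : S, q s s' * (r n s + V (n - t s) s'))
    (hW : ∀ n s, P s → 0 < n → W n s = ∑ s' : S, q s s' * (r n s + W (n - t s) s')) :
    ∀ n s, P s → V n s = W n s := by
  intro n
  induction n using Nat.strong_induction_on with
  | _ n ih =>
    intro s hs
    rcases Nat.eq_zero_or_pos n with rfl | hn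
    · exact h0 s
    rw [hV n s hs hn, hW n s hs hn]
    refine sum_congr rfl fun s' _ => ?_
    by_cases hq : q s s' = 0
    · simp [hq]
    · rw [ih _ (Nat.sub_lt hn (ht s)) s' (hclosed s hs s' hq)]

/-- **Value equivalence for the reduced MDP (Proposition on V = 𝕍).**

Setup: `M = (S, A, p, c)` is a finite MDP, `π` a policy, `C` the forced
"continue" action, and `forced s` holds iff `s ∈ S ∖ S'` (its only applicable
action is `C`, with deterministic successor).  For each state `s_a ∈ S'`
(i.e. `¬ forced s_a`), `ch s_a` enumerates the maximal chain
`s_a = ch s_a 0 → ch s_a 1 → … → ch s_a (k s_a)` of deterministic transitions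
initiated by `π s_a`, all intermediate states being forced; the cost along the
chain is the constant `cbar s_a`; the transition duration is
`t s_a = k s_a + 1`; the reduced kernel is
`p' s_a s_b = p (ch s_a (k s_a)) C s_b` (or `p s_a (π s_a) s_b` if `k s_a = 0`),
landing only in `S'`.

`V` is the standard value function of `M` under `π` and `W` (written `𝕍` in
the paper) the modified value function of the reduced MDP `M'` with cost
`c_n(s, a, s') = cbar s · min n (t s)`.

Conclusion: `V n s = W n s` for every `n` and every `s ∈ S'`. -/
theorem value_equivalence_reduced_mdp
    {S A : Type*} [Fintype S] [DecidableEq S]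
    (p c : S → A → S → ℝ) (π : S → A) (C : A)
    (forced : S → Prop)
    (k : S → ℕ) (ch : S → ℕ → S) (cbar : S → ℝ)
    (t : S → ℕ) (p' : S → S → ℝ)
    (V W : ℕ → S → ℝ)
    -- MDP: probabilities sum to one
    (hprob : ∀ s a, ∑ s' : S, p s a s' = 1)
    -- the policy of `M` necessarily takes `C` on forced states
    (hπC : ∀ s, forced s → π s = C)
    -- chain structure
    (hch0 : ∀ s, ch s 0 = s)
    (hchain_forced : ∀ s, ¬ forced s → ∀ i, 1 ≤ i → i ≤ k s → forced (ch s i))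
    (hchain_det : ∀ s, ¬ forced s → ∀ i, i < k s → ∀ s'',
      p (ch s i) (if i = 0 then π s else C) s''
        = if s'' = ch s (i + 1) then 1 else 0)
    -- the cost is constant along the chain: `c(s_i, ·, ·) = c_{s_a}`
    (hcost : ∀ s, ¬ forced s → ∀ i, i ≤ k s → ∀ s',
      c (ch s i) (if i = 0 then π s else C) s' = cbar s)
    -- transition duration of the collapsed transition
    (ht : ∀ s, t s = k s + 1)
    -- reduced transition kernel: stochastic last step of the chain
    (hp' : ∀ s, ¬ forced s → ∀ s',
      p' s s' = p (ch s (k s)) (if k s = 0 then π s else C) s')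
    -- maximality of the chain: `p'` lands in `S'`
    (hland : ∀ s, ¬ forced s → ∀ s', p' s s' ≠ 0 → ¬ forced s')
    -- standard value function of `M` under `π`
    (hV0 : ∀ s, V 0 s = 0)
    (hV : ∀ n s, V (n + 1) s
      = ∑ s' : S, p s (π s) s' * (c s (π s) s' + V n s'))
    -- modified value function of `M'` (with `W m = 0` for `m = 0`,
    -- truncated subtraction realizing `𝕍_m = 0` for `m ≤ 0`)
    (hW0 : ∀ s, W 0 s = 0)
    (hW : ∀ n s, 0 < n → W n s
      = ∑ s' : S, p' s s' * (cbar s * (min n (t s) : ℕ) + W (n - t s) s')) :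
    ∀ n s, ¬ forced s → V n s = W n s := by
  have hπ_chain : ∀ s, ¬ forced s → ∀ i ≤ k s, π (ch s i) = if i = 0 then π s else C := by
    intro s hs i hi
    rcases Nat.eq_zero_or_pos i with rfl | hi0
    · simp [hch0]
    · rw [if_neg hi0.ne', hπC _ (hchain_forced s hs i hi0 hi)]
  refine eq_of_same_recursion (fun s => ¬ forced s) p' (fun n s => cbar s * (min n (t s) : ℕ))
    t (fun s => (ht s).symm ▸ Nat.succ_pos _) hland V W (fun s => by rw [hV0, hW0])
    (fun n s hs _ => ?_) (fun n s _ hn => hW n s hn)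
  have hcollapse := value_eq_collapsed_bellman hV
    (fun i hi s' => by rw [hπ_chain s hs i hi.le, hchain_det s hs i hi]) hV0 (hprob _ _)
    (fun i hi s' => by rw [hπ_chain s hs i hi, hcost s hs i hi]) n
  simpa only [hch0, hπ_chain s hs (k s) le_rfl, ← hp' s hs, ← ht] using hcollapse
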